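/- Let F : ℝ² → ℝ be F(x,y) = |x| − |y|. Then lim_{λ→∞} λ·E_λ(F)(0,0) = 1/2, where E_λ(F) = C^u_λ(F) − C^l_λ(F). -/

import Mathlib

open Filter Metric Set
open scoped Topology RealInnerProductSpace

/-- The convex envelope of `g`: pointwise supremum of convex functions below `g`. -/
noncomputable def convEnv {E : Type*} [NormedAddCommGroup E] [NormedSpace ℝ E]
    (g : E → ℝ) (x : E) : ℝ :=
  sSup {y : ℝ | ∃ h : E → ℝ, ConvexOn ℝ Set.univ h ∧ (∀ z, h z ≤ g z) ∧ y = h x}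

/-- Upper compensated convex transform. -/
noncomputable def upperT {E : Type*} [NormedAddCommGroup E] [NormedSpace ℝ E]
    (lam : ℝ) (g : E → ℝ) (x : E) : ℝ :=
  lam * ‖x‖ ^ 2 - convEnv (fun y => lam * ‖y‖ ^ 2 - g y) x

/-- Lower compensated convex transform. -/
noncomputable def lowerT {E : Type*} [NormedAddCommGroup E] [NormedSpace ℝ E]
    (lam : ℝ) (g : E → ℝ) (x : E) : ℝ :=
  convEnv (fun y => g y + lam * ‖y‖ ^ 2) x - lam * ‖x‖ ^ 2

/-!
At the origin both compensated transforms of `|⟪u, ·⟫| - |⟪w, ·⟫|`, for an orthonormal pair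
`u, w`, reduce to the convex envelope of `lam * ‖z‖ ^ 2 - |⟪u, z⟫| + |⟪w, z⟫|` at `0`, with the
roles of `u` and `w` swapped for the lower transform. This envelope equals `-1 / (4 lam)`: the
convex function `|⟪w, ·⟫| - 1 / (4 lam)` lies below it because `lam t ^ 2 - t ≥ -1 / (4 lam)`,
and every convex minorant is at most the average of its values at `± u / (2 lam)`, which are both
`-1 / (4 lam)`. Hence `lam * E_lam(F)(0) = lam * (1 / (4 lam) + 1 / (4 lam)) = 1 / 2` for every
`lam > 0`.
-/

section ConvexEnvelope

variable {E : Type*} [NormedAddCommGroup E] [NormedSpace ℝ E]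

lemma le_convEnv {g h : E → ℝ} (hh : ConvexOn ℝ univ h) (hhg : ∀ z, h z ≤ g z) (x : E) :
    h x ≤ convEnv g x := by
  refine le_csSup ⟨g x, ?_⟩ ⟨h, hh, hhg, rfl⟩
  rintro _ ⟨k, -, hkg, rfl⟩
  exact hkg x

lemma convEnv_le_midpoint {g h : E → ℝ} (hh : ConvexOn ℝ univ h) (hhg : ∀ z, h z ≤ g z)
    (x v : E) : convEnv g x ≤ (g (x + v) + g (x - v)) / 2 := by
  refine csSup_le ⟨_, h, hh, hhg, rfl⟩ ?_
  rintro _ ⟨k, hk, hkg, rfl⟩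
  have hmid := hk.2 (mem_univ (x + v)) (mem_univ (x - v)) (by norm_num : (0 : ℝ) ≤ 1 / 2)
    (by norm_num : (0 : ℝ) ≤ 1 / 2) (by norm_num)
  have hx : (1 / 2 : ℝ) • (x + v) + (1 / 2 : ℝ) • (x - v) = x := by
    rw [← smul_add, add_add_sub_cancel, ← two_smul ℝ x, smul_smul]
    norm_num
  rw [hx, smul_eq_mul, smul_eq_mul] at hmid
  linarith [hkg (x + v), hkg (x - v)]

end ConvexEnvelope

section InnerProductSpace

variable {E : Type*} [NormedAddCommGroup E] [InnerProductSpace ℝ E]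

lemma convexOn_abs_inner (w : E) : ConvexOn ℝ univ fun z : E => |⟪w, z⟫| :=
  (convexOn_norm convex_univ).comp_linearMap (innerₛₗ ℝ w)

lemma neg_inv_four_mul_le_sq_norm_sub_abs_inner {lam : ℝ} (hlam : 0 < lam) {u : E}
    (hu : ‖u‖ ≤ 1) (z : E) : -(1 / (4 * lam)) ≤ lam * ‖z‖ ^ 2 - |⟪u, z⟫| := by
  have hcs : |⟪u, z⟫| ≤ ‖z‖ :=
    (abs_real_inner_le_norm u z).trans (mul_le_of_le_one_left (norm_nonneg z) hu)
  have hsq : 0 ≤ lam * (‖z‖ - 1 / (2 * lam)) ^ 2 := by positivity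
  have hexp : lam * (‖z‖ - 1 / (2 * lam)) ^ 2 = lam * ‖z‖ ^ 2 - ‖z‖ + 1 / (4 * lam) := by
    field_simp; ring
  linarith

lemma convEnv_sq_norm_sub_abs_inner_add_abs_inner {lam : ℝ} (hlam : 0 < lam) {u w : E}
    (hu : ‖u‖ = 1) (huw : ⟪w, u⟫ = 0) :
    convEnv (fun z => lam * ‖z‖ ^ 2 - |⟪u, z⟫| + |⟪w, z⟫|) 0 = -(1 / (4 * lam)) := by
  have hminor : ∀ z : E, |⟪w, z⟫| + -(1 / (4 * lam)) ≤ lam * ‖z‖ ^ 2 - |⟪u, z⟫| + |⟪w, z⟫| :=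
    fun z => by linarith [neg_inv_four_mul_le_sq_norm_sub_abs_inner hlam hu.le z]
  have hconv := (convexOn_abs_inner w).add_const (-(1 / (4 * lam)))
  refine le_antisymm ?_ (by simpa using le_convEnv hconv hminor 0)
  refine (convEnv_le_midpoint hconv hminor 0 ((1 / (2 * lam)) • u)).trans_eq ?_
  have hval : lam * ‖(1 / (2 * lam)) • u‖ ^ 2 - |⟪u, (1 / (2 * lam)) • u⟫|
      + |⟪w, (1 / (2 * lam)) • u⟫| = -(1 / (4 * lam)) := by
    rw [norm_smul, inner_smul_right, inner_smul_right, huw, real_inner_self_eq_norm_sq, hu,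
      mul_zero, abs_zero,
      Real.norm_of_nonneg (by positivity), abs_of_nonneg (by positivity)]
    field_simp; ring
  simp only [zero_add, zero_sub, norm_neg, inner_neg_right, abs_neg, hval]
  ring

lemma upperT_abs_inner_sub_abs_inner_zero {lam : ℝ} (hlam : 0 < lam) {u w : E}
    (hu : ‖u‖ = 1) (huw : ⟪w, u⟫ = 0) :
    upperT lam (fun z => |⟪u, z⟫| - |⟪w, z⟫|) 0 = 1 / (4 * lam) := by
  have h := convEnv_sq_norm_sub_abs_inner_add_abs_inner hlam hu huw
  simp only [upperT, norm_zero, sub_add] at h ⊢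
  rw [h]; ring

lemma lowerT_abs_inner_sub_abs_inner_zero {lam : ℝ} (hlam : 0 < lam) {u w : E}
    (hw : ‖w‖ = 1) (huw : ⟪u, w⟫ = 0) :
    lowerT lam (fun z => |⟪u, z⟫| - |⟪w, z⟫|) 0 = -(1 / (4 * lam)) := by
  have h := convEnv_sq_norm_sub_abs_inner_add_abs_inner hlam hw huw
  have hfun : (fun z : E => |⟪u, z⟫| - |⟪w, z⟫| + lam * ‖z‖ ^ 2)
      = fun z => lam * ‖z‖ ^ 2 - |⟪w, z⟫| + |⟪u, z⟫| := by
    funext z; ring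
  simp only [lowerT, norm_zero, hfun, h]
  ring

end InnerProductSpace

theorem stmt_17 :
    Tendsto (fun lam : ℝ => lam *
        (upperT lam (fun p : EuclideanSpace ℝ (Fin 2) => |p 0| - |p 1|) 0 -
         lowerT lam (fun p : EuclideanSpace ℝ (Fin 2) => |p 0| - |p 1|) 0))
      atTop (nhds (1 / 2)) := by
  set e : Fin 2 → EuclideanSpace ℝ (Fin 2) := fun i => EuclideanSpace.single i 1
  have he : Orthonormal ℝ e := EuclideanSpace.orthonormal_single
  have hcoord : (fun p : EuclideanSpace ℝ (Fin 2) => |p 0| - |p 1|)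
      = fun p => |⟪e 0, p⟫| - |⟪e 1, p⟫| := by
    simp [e, EuclideanSpace.inner_single_left]
  refine tendsto_const_nhds.congr' ?_
  filter_upwards [eventually_gt_atTop 0] with lam hlam
  rw [hcoord, upperT_abs_inner_sub_abs_inner_zero hlam (he.1 0) (he.2 (by decide)),
    lowerT_abs_inner_sub_abs_inner_zero hlam (he.1 1) (he.2 (by decide))]
  field_simp
  norm_num
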